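/- Suppose λ ≥ 1 and constants C_{32}, C > 0 are such that (a) every nonnegative measure ν on ∂T² with 𝕍^ν ≥ C₁ on supp(ν) satisfies ℰ_E[ν] ≥ (1/2)ℰ[ν] where E = {𝕍^ν ≥ C₁/(4C_{32})}, and (b) μ is a nonnegative measure on ∂T² satisfying the Carleson condition ℰ_E[μ] ≤ μ(E) for all E ⊂ ∂T². Let C = max over nonempty F ⊂ ∂T² with μ(F) > 0 of ℰ[μ|F]/μ(F). Then C ≤ 288 C_{32}². -/
import Mathlib


open Finset
open scoped Classical

noncomputable section

variable {X Y : Type*} [Fintype X] [Fintype Y] [PartialOrder X] [PartialOrder Y]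

/-- Hardy operator 𝕀 on the bi-tree: sum over ancestors (larger elements). -/
def hI (f : X × Y → ℝ) (a : X × Y) : ℝ :=
  ∑ b ∈ Finset.univ.filter (fun b => a ≤ b), f b

/-- Adjoint Hardy operator 𝕀*: sum over descendants (smaller elements). -/
def hIs (f : X × Y → ℝ) (a : X × Y) : ℝ :=
  ∑ b ∈ Finset.univ.filter (fun b => b ≤ a), f b

/-- Potential 𝕍^μ = 𝕀(𝕀*μ). -/
def pot (μ : X × Y → ℝ) : X × Y → ℝ := hI (hIs μ)

/-- Energy ℰ[μ] = Σ_α (𝕀*μ(α))². -/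
def energy (μ : X × Y → ℝ) : ℝ := ∑ a : X × Y, (hIs μ a) ^ 2

/-- Restriction μ|E of a measure to a set E. -/
def restrict (μ : X × Y → ℝ) (E : Finset (X × Y)) : X × Y → ℝ :=
  fun ω => if ω ∈ E then μ ω else 0

/-- Total mass |μ| = Σ_{ω ∈ ∂T²} μ(ω); the boundary ∂T² is the set of minimal vertices. -/
def mass (μ : X × Y → ℝ) : ℝ :=
  ∑ ω ∈ Finset.univ.filter (fun ω : X × Y => IsMin ω), μ ω

/-- Local energy ℰ_E[ν] = Σ_{R ∈ ℛ_E} ν(R)²: the sum of ν(R_α)² over those vertices α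
whose rectangle R_α lies in U_E, i.e. all boundary squares below α belong to E. -/
def localEnergy (ν : X × Y → ℝ) (E : Finset (X × Y)) : ℝ :=
  ∑ α ∈ Finset.univ.filter
      (fun α : X × Y => ∀ ω : X × Y, IsMin ω → ω ≤ α → ω ∈ E),
    (hIs ν α) ^ 2

/-! ### Auxiliary lemmas -/

lemma hIs_nonneg {ν : X × Y → ℝ} (h : ∀ a, 0 ≤ ν a) (a : X × Y) : 0 ≤ hIs ν a :=
  Finset.sum_nonneg fun b _ => h b

lemma hIs_mono {σ τ : X × Y → ℝ} (h : ∀ a, σ a ≤ τ a) (a : X × Y) : hIs σ a ≤ hIs τ a :=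
  Finset.sum_le_sum fun b _ => h b

lemma pot_nonneg {ν : X × Y → ℝ} (h : ∀ a, 0 ≤ ν a) (a : X × Y) : 0 ≤ pot ν a :=
  Finset.sum_nonneg fun b _ => hIs_nonneg h b

lemma hIs_add (σ τ : X × Y → ℝ) (a : X × Y) : hIs (σ + τ) a = hIs σ a + hIs τ a := by
  simp [hIs, Finset.sum_add_distrib]

lemma pot_add (σ τ : X × Y → ℝ) (a : X × Y) : pot (σ + τ) a = pot σ a + pot τ a := by
  simp only [pot, hI]
  rw [← Finset.sum_add_distrib]
  exact Finset.sum_congr rfl fun b _ => hIs_add σ τ b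

/-- The bilinear energy form. -/
def eb (σ τ : X × Y → ℝ) : ℝ := ∑ a : X × Y, hIs σ a * hIs τ a

lemma eb_eq (σ τ : X × Y → ℝ) : eb σ τ = ∑ b : X × Y, τ b * pot σ b := by
  have key : ∀ f : X × Y → ℝ, ∑ a : X × Y, f a * hIs τ a
      = ∑ b : X × Y, τ b * ∑ a ∈ Finset.univ.filter (fun a => b ≤ a), f a := by
    intro f
    simp only [hIs, Finset.sum_filter, Finset.mul_sum]
    rw [Finset.sum_comm]
    refine Finset.sum_congr rfl fun b _ => Finset.sum_congr rfl fun a _ => ?_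
    by_cases h : b ≤ a <;> simp [h, mul_comm]
  simpa [eb, pot, hI] using key (hIs σ)

lemma energy_eq_eb (σ : X × Y → ℝ) : energy σ = eb σ σ := by
  simp [energy, eb, sq]

lemma energy_add (σ τ : X × Y → ℝ) :
    energy (σ + τ) = energy σ + 2 * eb σ τ + energy τ := by
  have h : ∀ a : X × Y, hIs (σ + τ) a ^ 2
      = hIs σ a ^ 2 + 2 * (hIs σ a * hIs τ a) + hIs τ a ^ 2 := fun a => by
    rw [hIs_add]; ring
  simp only [energy, eb, h, Finset.sum_add_distrib, Finset.mul_sum]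

lemma eb_sq_le (σ τ : X × Y → ℝ) : (eb σ τ) ^ 2 ≤ energy σ * energy τ := by
  simpa [eb, energy] using
    Finset.sum_mul_sq_le_sq_mul_sq Finset.univ (fun a : X × Y => hIs σ a)
      (fun a : X × Y => hIs τ a)

lemma energy_nonneg (σ : X × Y → ℝ) : 0 ≤ energy σ :=
  Finset.sum_nonneg fun a _ => sq_nonneg _

/-- The stopping-time construction: iteratively remove boundary points of small potential.
The remaining restriction has potential ≥ Cc/3 on its support, and the energy loss is
controlled by the removed mass. -/
lemma stopping (μ : X × Y → ℝ) (hμ0 : ∀ a : X × Y, 0 ≤ μ a) (Cc : ℝ) (F : Finset (X × Y)) :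
    ∃ G ⊆ F, (∀ ω : X × Y, 0 < restrict μ G ω → Cc / 3 ≤ pot (restrict μ G) ω) ∧
      energy (restrict μ F) ≤ energy (restrict μ G) + (2 * Cc / 3) * ∑ ω ∈ F \ G, μ ω := by
  induction F using Finset.strongInduction with
  | _ F ih =>
    by_cases hgood : ∀ ω : X × Y, 0 < restrict μ F ω → Cc / 3 ≤ pot (restrict μ F) ω
    · exact ⟨F, Finset.Subset.rfl, hgood, by simp⟩
    · push_neg at hgood
      obtain ⟨ω₀, hpos, hbad⟩ := hgood
      have hω₀F : ω₀ ∈ F := by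
        by_contra h; simp [_root_.restrict, h] at hpos
      have hμω₀ : 0 < μ ω₀ := by simpa [_root_.restrict, hω₀F] using hpos
      obtain ⟨G, hGsub, hGpot, hGen⟩ := ih (F.erase ω₀) (Finset.erase_ssubset hω₀F)
      have hω₀G : ω₀ ∉ G := fun h => (Finset.notMem_erase ω₀ F) (hGsub h)
      refine ⟨G, hGsub.trans (Finset.erase_subset _ _), hGpot, ?_⟩
      set σ : X × Y → ℝ := restrict μ (F.erase ω₀) with hσ
      set δ : X × Y → ℝ := fun a => if a = ω₀ then μ ω₀ else 0 with hδ
      have hδ0 : ∀ a, 0 ≤ δ a := by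
        intro a; simp only [hδ]; split <;> [exact hμ0 ω₀; exact le_rfl]
      have hsplit : restrict μ F = σ + δ := by
        funext a
        by_cases ha : a = ω₀
        · subst ha
          simp [_root_.restrict, hσ, hδ, hω₀F]
        · simp [hσ, hδ, _root_.restrict, ha, Finset.mem_erase]
      have hebσδ : eb σ δ = μ ω₀ * pot σ ω₀ := by
        rw [eb_eq]
        rw [show (∑ b : X × Y, δ b * pot σ b)
            = ∑ b : X × Y, if b = ω₀ then μ ω₀ * pot σ b else 0 by
          refine Finset.sum_congr rfl fun b _ => ?_
          simp only [hδ]; split <;> simp]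
        simp
      have heδ : energy δ = μ ω₀ * pot δ ω₀ := by
        rw [energy_eq_eb, eb_eq]
        rw [show (∑ b : X × Y, δ b * pot δ b)
            = ∑ b : X × Y, if b = ω₀ then μ ω₀ * pot δ b else 0 by
          refine Finset.sum_congr rfl fun b _ => ?_
          simp only [hδ]; split <;> simp]
        simp
      have hpotF : pot (restrict μ F) ω₀ = pot σ ω₀ + pot δ ω₀ := by
        rw [hsplit, pot_add]
      have hpotδ0 : 0 ≤ pot δ ω₀ := pot_nonneg hδ0 ω₀
      have hσle : pot σ ω₀ ≤ pot (restrict μ F) ω₀ := by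
        rw [hpotF]; linarith
      have hloss : energy (restrict μ F) ≤ energy σ + (2 * Cc / 3) * μ ω₀ := by
        rw [hsplit, energy_add, hebσδ, heδ]
        have h1 : 2 * (μ ω₀ * pot σ ω₀) + μ ω₀ * pot δ ω₀
            = μ ω₀ * (pot σ ω₀ + pot (restrict μ F) ω₀) := by rw [hpotF]; ring
        have h2 : μ ω₀ * (pot σ ω₀ + pot (restrict μ F) ω₀)
            ≤ μ ω₀ * (2 * (Cc / 3)) := by
          apply mul_le_mul_of_nonneg_left _ hμω₀.le
          linarith
        nlinarith [h1, h2]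
      have hsum : ∑ ω ∈ F \ G, μ ω = μ ω₀ + ∑ ω ∈ F.erase ω₀ \ G, μ ω := by
        have hmem : ω₀ ∈ F \ G := Finset.mem_sdiff.2 ⟨hω₀F, hω₀G⟩
        have hset : (F \ G).erase ω₀ = F.erase ω₀ \ G := by
          ext a
          simp only [Finset.mem_erase, Finset.mem_sdiff]
          tauto
        rw [← Finset.add_sum_erase _ _ hmem, hset]
      rw [hsum]
      linarith

/-- The bi-parameter Carleson condition implies REC: assuming Lemma 3.2 (hypothesis (a))
and the Carleson condition ℰ_E[μ] ≤ μ(E), the maximal REC ratio C = max_F ℰ[μ|F]/μ(F)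
satisfies C ≤ 288 C₃₂². -/
theorem stmt14 (C32 : ℝ) (hC32 : 0 < C32)
    (ha : ∀ ν : X × Y → ℝ, (∀ a : X × Y, 0 ≤ ν a) → (∀ a : X × Y, ¬ IsMin a → ν a = 0) →
      ∀ C₁ : ℝ, 0 < C₁ → (∀ ω : X × Y, 0 < ν ω → C₁ ≤ pot ν ω) →
        (1 / 2) * energy ν ≤ localEnergy ν
          (Finset.univ.filter (fun ω : X × Y => IsMin ω ∧ C₁ / (4 * C32) ≤ pot ν ω)))
    (μ : X × Y → ℝ) (hμ0 : ∀ a : X × Y, 0 ≤ μ a)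
    (hμsupp : ∀ a : X × Y, ¬ IsMin a → μ a = 0)
    (hCarl : ∀ E : Finset (X × Y), (∀ ω ∈ E, IsMin ω) →
      localEnergy μ E ≤ ∑ ω ∈ E, μ ω)
    (Cc : ℝ)
    (hmax : IsGreatest {r : ℝ | ∃ F : Finset (X × Y), (∀ ω ∈ F, IsMin ω) ∧
      0 < ∑ ω ∈ F, μ ω ∧ r = energy (restrict μ F) / ∑ ω ∈ F, μ ω} Cc) :
    Cc ≤ 288 * C32 ^ 2 := by
  obtain ⟨⟨F₀, hF₀min, hF₀pos, hF₀eq⟩, hub⟩ := hmax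
  have hCc0 : 0 ≤ Cc := by
    rw [hF₀eq]
    exact div_nonneg (energy_nonneg _) hF₀pos.le
  rcases eq_or_lt_of_le hCc0 with hCc | hCc
  · nlinarith [sq_nonneg C32]
  -- energy of the restriction to F₀
  have hEF₀ : energy (restrict μ F₀) = Cc * ∑ ω ∈ F₀, μ ω := by
    rw [hF₀eq, div_mul_cancel₀ _ hF₀pos.ne']
  -- stopping time
  obtain ⟨G, hGsub, hGpot, hGen⟩ := stopping μ hμ0 Cc F₀
  set ν : X × Y → ℝ := restrict μ G with hν
  have hν0 : ∀ a, 0 ≤ ν a := by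
    intro a; simp only [hν, _root_.restrict]; split <;> [exact hμ0 a; exact le_rfl]
  have hνle : ∀ a, ν a ≤ μ a := by
    intro a; simp only [hν, _root_.restrict]; split <;> [exact le_rfl; exact hμ0 a]
  have hνsupp : ∀ a : X × Y, ¬ IsMin a → ν a = 0 := by
    intro a ha; simp only [hν, _root_.restrict]; rw [hμsupp a ha]; simp
  -- ν retains at least a third of the energy
  have hsdle : ∑ ω ∈ F₀ \ G, μ ω ≤ ∑ ω ∈ F₀, μ ω :=
    Finset.sum_le_sum_of_subset_of_nonneg Finset.sdiff_subset (fun i _ _ => hμ0 i)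
  have hEν : (Cc / 3) * ∑ ω ∈ F₀, μ ω ≤ energy ν := by
    have h1 : Cc * ∑ ω ∈ F₀, μ ω ≤ energy ν + (2 * Cc / 3) * ∑ ω ∈ F₀, μ ω := by
      rw [← hEF₀]
      refine hGen.trans ?_
      have : (2 * Cc / 3) * ∑ ω ∈ F₀ \ G, μ ω ≤ (2 * Cc / 3) * ∑ ω ∈ F₀, μ ω :=
        mul_le_mul_of_nonneg_left hsdle (by positivity)
      linarith
    linarith
  have hEνpos : 0 < energy ν :=
    lt_of_lt_of_le (by positivity) hEν
  -- apply hypothesis (a) with C₁ = Cc/3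
  have hha := ha ν hν0 hνsupp (Cc / 3) (by positivity) hGpot
  set E : Finset (X × Y) :=
    Finset.univ.filter (fun ω : X × Y => IsMin ω ∧ Cc / 3 / (4 * C32) ≤ pot ν ω) with hE
  have hEmin : ∀ ω ∈ E, IsMin ω := by
    intro ω hω; exact (Finset.mem_filter.1 hω).2.1
  -- local energy of ν is dominated by local energy of μ
  have hle : localEnergy ν E ≤ localEnergy μ E := by
    refine Finset.sum_le_sum fun α _ => ?_
    exact pow_le_pow_left₀ (hIs_nonneg hν0 α) (hIs_mono hνle α) 2
  set M : ℝ := ∑ ω ∈ E, μ ω with hM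
  have hEνM : (1 / 2) * energy ν ≤ M := le_trans hha (le_trans hle (hCarl E hEmin))
  have hMpos : 0 < M := lt_of_lt_of_le (by positivity) hEνM
  -- the key estimate via Cauchy–Schwarz and maximality
  set K : ℝ := Cc / 3 / (4 * C32) with hK
  have hKpos : 0 < K := by positivity
  set ρ : X × Y → ℝ := restrict μ E with hρ
  have hKM : K * M ≤ eb ν ρ := by
    rw [eb_eq]
    have h1 : (∑ b : X × Y, ρ b * pot ν b) = ∑ b ∈ E, μ b * pot ν b := by
      rw [show (∑ b : X × Y, ρ b * pot ν b)
          = ∑ b : X × Y, if b ∈ E then μ b * pot ν b else 0 by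
        refine Finset.sum_congr rfl fun b _ => ?_
        simp only [hρ, _root_.restrict]; split <;> simp]
      rw [← Finset.sum_filter, Finset.filter_univ_mem]
    rw [h1, hM, Finset.mul_sum]
    refine Finset.sum_le_sum fun ω hω => ?_
    have hpot : K ≤ pot ν ω := (Finset.mem_filter.1 hω).2.2
    rw [mul_comm]
    exact mul_le_mul_of_nonneg_left hpot (hμ0 ω)
  have hρE : energy ρ ≤ Cc * M := by
    have hmem : energy ρ / M ∈ {r : ℝ | ∃ F : Finset (X × Y), (∀ ω ∈ F, IsMin ω) ∧
        0 < ∑ ω ∈ F, μ ω ∧ r = energy (restrict μ F) / ∑ ω ∈ F, μ ω} :=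
      ⟨E, hEmin, hMpos, rfl⟩
    have := hub hmem
    rw [div_le_iff₀ hMpos] at this
    linarith
  have hCS : (K * M) ^ 2 ≤ energy ν * (Cc * M) := by
    calc (K * M) ^ 2 ≤ (eb ν ρ) ^ 2 :=
          pow_le_pow_left₀ (by positivity) hKM 2
      _ ≤ energy ν * energy ρ := eb_sq_le ν ρ
      _ ≤ energy ν * (Cc * M) := mul_le_mul_of_nonneg_left hρE hEνpos.le
  -- conclude
  have hK2M : K ^ 2 * M ≤ energy ν * Cc := by
    have h := hCS
    rw [mul_pow] at h
    have h2 : K ^ 2 * M * M ≤ energy ν * Cc * M := by nlinarith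
    exact le_of_mul_le_mul_right h2 hMpos
  have hK2 : K ^ 2 ≤ 2 * Cc := by
    have h1 : K ^ 2 * ((1 / 2) * energy ν) ≤ K ^ 2 * M :=
      mul_le_mul_of_nonneg_left hEνM (sq_nonneg K)
    have h2 : K ^ 2 * ((1 / 2) * energy ν) ≤ energy ν * Cc := le_trans h1 hK2M
    nlinarith
  have hKval : K * (12 * C32) = Cc := by
    rw [hK, div_div, div_mul_eq_mul_div,
      div_eq_iff (by positivity : (3:ℝ) * (4 * C32) ≠ 0)]
    ring
  nlinarith [mul_le_mul_of_nonneg_right hK2 (sq_nonneg C32), hKval, hCc, hC32, sq_nonneg C32]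

end
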